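/- A recurrence matrix need not be invertible within Rec: the diagonal element A ∈ K^{M_{p×p}} defined by A[U,W] = 1 + n if U = W is a word of length n and A[U,W] = 0 otherwise is a recurrence matrix (its recursive closure is 2-dimensional, spanned by A and the diagonal all-ones function), it is invertible in K^{M_{p×p}} for the matrix product when char(K) = 0 (each finite matrix A[M^l] is diagonal with nonzero entries 1+l), but its matrix-product inverse, the diagonal function with entries 1/(1+n), has infinite-dimensional recursive closure when p ≥ 2, hence is not a recurrence matrix. -/

import Mathlib

/-- The free monoid `M_{p×q}` of pairs of equal-length words. -/
def EqPair (p q : ℕ) : Type :=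
  {x : List (Fin p) × List (Fin q) // x.1.length = x.2.length}

/-- The single-letter shift operator `ρ(s,t)`: `(ρ(s,t)A)[U,W] = A[Us,Wt]`. -/
def shiftL (p q : ℕ) (K : Type*) [Field K] (s : Fin p) (t : Fin q) :
    (EqPair p q → K) →ₗ[K] (EqPair p q → K) where
  toFun A := fun x => A ⟨(x.1.1 ++ [s], x.1.2 ++ [t]), by simp [x.2]⟩
  map_add' _ _ := rfl
  map_smul' _ _ := rfl

/-- A subspace of `K^{M_{p×q}}` is recursively closed if it is stable under
all shift operators. -/
def RecClosed (p q : ℕ) (K : Type*) [Field K]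
    (V : Submodule K (EqPair p q → K)) : Prop :=
  ∀ (s : Fin p) (t : Fin q), ∀ A ∈ V, shiftL p q K s t A ∈ V

/-- The recursive closure of `A`: the smallest recursively closed subspace
containing `A`. -/
def recClosure (p q : ℕ) (K : Type*) [Field K] (A : EqPair p q → K) :
    Submodule K (EqPair p q → K) :=
  sInf {V | A ∈ V ∧ RecClosed p q K V}

/-- `A` is a recurrence matrix if its recursive closure is
finite-dimensional. -/
def IsRecMatrix (p q : ℕ) (K : Type*) [Field K] (A : EqPair p q → K) : Prop :=
  FiniteDimensional K (recClosure p q K A)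

/-- The matrix product `(A·B)[U,W] = ∑_V A[U,V] B[V,W]`. -/
def matMul {p r q : ℕ} {K : Type*} [Field K]
    (A : EqPair p r → K) (B : EqPair r q → K) : EqPair p q → K :=
  fun x => ∑ V : Fin x.1.1.length → Fin r,
    A ⟨(x.1.1, List.ofFn V), by simp⟩ * B ⟨(List.ofFn V, x.1.2), by simp [x.2]⟩

/-- The identity for the matrix product: the Kronecker delta on word pairs. -/
def deltaFun (p : ℕ) (K : Type*) [Field K] : EqPair p p → K :=
  fun x => if x.1.1 = x.1.2 then 1 else 0

/-- The diagonal recurrence matrix `A[U,U] = 1 + l(U)`, `A[U,W] = 0` for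
`U ≠ W`. -/
def diagA (p : ℕ) (K : Type*) [Field K] : EqPair p p → K :=
  fun x => if x.1.1 = x.1.2 then (1 + x.1.1.length : K) else 0

/-! Shifting a diagonal function `diagFun f : [U, U] ↦ f (l U)` by a pair of equal letters
replaces `f` by `f (· + 1)`; by a pair of distinct letters it gives `0`. Hence the recursive
closure of `A = diagFun (1 + n)` is spanned by `A` and the identity `diagFun 1`, while the closure
of its inverse `diagFun (1 + n)⁻¹` contains every `diagFun (1 + k + n)⁻¹`. These are linearly
independent since the columns `n ↦ (x n - a k)⁻¹` of an infinite Cauchy matrix are: a vanishing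
combination `∑ g k / (y - a k)` clears to a polynomial with infinitely many roots `x n`, and
evaluating that polynomial at `a i` isolates `g i`. -/

section RecursiveClosure

variable {p q : ℕ} {K : Type*} [Field K]

theorem mem_recClosure_self (A : EqPair p q → K) : A ∈ recClosure p q K A :=
  Submodule.mem_sInf.2 fun _ hV => hV.1

theorem recClosed_recClosure (A : EqPair p q → K) : RecClosed p q K (recClosure p q K A) :=
  fun s t _ hB => Submodule.mem_sInf.2 fun V hV => hV.2 s t _ (Submodule.mem_sInf.1 hB V hV)

theorem recClosure_le {A : EqPair p q → K} {V : Submodule K (EqPair p q → K)} (hA : A ∈ V)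
    (hV : RecClosed p q K V) : recClosure p q K A ≤ V :=
  sInf_le ⟨hA, hV⟩

theorem recClosed_span {S : Set (EqPair p q → K)}
    (hS : ∀ s t, ∀ A ∈ S, shiftL p q K s t A ∈ Submodule.span K S) :
    RecClosed p q K (Submodule.span K S) := fun s t _ hA =>
  Submodule.span_le (p := (Submodule.span K S).comap (shiftL p q K s t)).2 (hS s t) hA

theorem not_isRecMatrix_of_linearIndependent {A : EqPair p q → K} {ι : Type*} [Infinite ι]
    {v : ι → EqPair p q → K} (hv : LinearIndependent K v)
    (hmem : ∀ i, v i ∈ recClosure p q K A) : ¬ IsRecMatrix p q K A := by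
  intro hA
  rw [IsRecMatrix] at hA
  exact Module.Finite.not_linearIndependent_of_infinite
    (fun i => (⟨v i, hmem i⟩ : recClosure p q K A)) (.of_comp (Submodule.subtype _) hv)

end RecursiveClosure

section Diagonal

variable {p : ℕ} {K : Type*} [Field K]

variable (p K) in
def diagFun : (ℕ → K) →ₗ[K] (EqPair p p → K) where
  toFun f x := if x.1.1 = x.1.2 then f x.1.1.length else 0
  map_add' f g := funext fun x => by by_cases h : x.1.1 = x.1.2 <;> simp [h]
  map_smul' c f := funext fun x => by by_cases h : x.1.1 = x.1.2 <;> simp [h]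

theorem diagA_eq_diagFun : diagA p K = diagFun p K (fun n => 1 + n) := rfl

theorem deltaFun_eq_diagFun : deltaFun p K = diagFun p K 1 := rfl

theorem diagFun_apply_replicate (f : ℕ → K) (a : Fin p) (n : ℕ) :
    diagFun p K f ⟨(List.replicate n a, List.replicate n a), rfl⟩ = f n := by
  simp [diagFun]

theorem diagFun_injective (hp : 0 < p) : Function.Injective (diagFun p K) := fun f g hfg =>
  funext fun n => by
    have := congrFun hfg ⟨(List.replicate n ⟨0, hp⟩, List.replicate n ⟨0, hp⟩), rfl⟩
    rwa [diagFun_apply_replicate, diagFun_apply_replicate] at this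

theorem shiftL_diagFun_self (s : Fin p) (f : ℕ → K) :
    shiftL p p K s s (diagFun p K f) = diagFun p K (fun n => f (n + 1)) := by
  funext ⟨⟨U, W⟩, h⟩
  simp [shiftL, diagFun]

theorem shiftL_diagFun_of_ne {s t : Fin p} (hst : s ≠ t) (f : ℕ → K) :
    shiftL p p K s t (diagFun p K f) = 0 := by
  funext ⟨⟨U, W⟩, h⟩
  have : U ++ [s] ≠ W ++ [t] := fun hUW => hst (by simpa using (List.append_inj' hUW rfl).2)
  exact if_neg this

theorem diagFun_comp_add_mem_recClosure (hp : 0 < p) (f : ℕ → K) (k : ℕ) :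
    diagFun p K (fun n => f (n + k)) ∈ recClosure p p K (diagFun p K f) := by
  induction k with
  | zero => exact mem_recClosure_self _
  | succ k ih =>
    have := recClosed_recClosure _ ⟨0, hp⟩ ⟨0, hp⟩ _ ih
    rw [shiftL_diagFun_self] at this
    simpa only [add_assoc, Nat.add_comm 1 k] using this

theorem matMul_diagFun (f g : ℕ → K) :
    matMul (diagFun p K f) (diagFun p K g) = diagFun p K (f * g) := by
  funext ⟨⟨U, W⟩, h⟩
  simp only [matMul]
  rw [Fintype.sum_eq_single (fun i => U.get i)]
  · by_cases hUW : U = W <;> simp [diagFun, hUW]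
  · intro V hV
    have : U ≠ List.ofFn V := fun hU =>
      hV (List.ofFn_inj.1 (by rw [List.ofFn_get]; exact hU)).symm
    simp [diagFun, this]

end Diagonal

section CauchyFamily

open Polynomial

variable {K : Type*} [Field K] {ι : Type*}

theorem sum_mul_inv_sub_mul_prod [DecidableEq ι] (s : Finset ι) (g a : ι → K) {y : K}
    (hy : ∀ k ∈ s, y ≠ a k) :
    (∑ k ∈ s, g k * (y - a k)⁻¹) * ∏ j ∈ s, (y - a j) =
      ∑ k ∈ s, g k * ∏ j ∈ s.erase k, (y - a j) := by
  rw [Finset.sum_mul]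
  refine Finset.sum_congr rfl fun k hk => ?_
  rw [← Finset.mul_prod_erase s _ hk, ← mul_assoc, mul_assoc (g k),
    inv_mul_cancel₀ (sub_ne_zero.2 (hy k hk)), mul_one]

theorem linearIndependent_inv_sub {α : Type*} [Infinite α] {a : ι → K}
    (ha : Function.Injective a) {x : α → K} (hx : Function.Injective x)
    (hxa : ∀ n k, x n ≠ a k) : LinearIndependent K (fun k n => (x n - a k)⁻¹) := by
  classical
  rw [linearIndependent_iff']
  intro s g hg i hi
  set P : K[X] := ∑ k ∈ s, C (g k) * ∏ j ∈ s.erase k, (X - C (a j))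
  have hP_eval (y : K) : P.eval y = ∑ k ∈ s, g k * ∏ j ∈ s.erase k, (y - a j) := by
    simp [P, eval_finsetSum, eval_prod]
  have hP_zero : P = 0 := by
    refine eq_zero_of_infinite_isRoot P ((Set.infinite_range_of_injective hx).mono ?_)
    rintro _ ⟨n, rfl⟩
    have hsum : ∑ k ∈ s, g k * (x n - a k)⁻¹ = 0 := by simpa using congrFun hg n
    rw [Set.mem_ofPred_eq, IsRoot, hP_eval,
      ← sum_mul_inv_sub_mul_prod s g a fun k _ => hxa n k, hsum, zero_mul]
  have hprod : ∏ j ∈ s.erase i, (a i - a j) ≠ 0 :=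
    Finset.prod_ne_zero_iff.2 fun j hj => sub_ne_zero.2 (ha.ne (Finset.ne_of_mem_erase hj).symm)
  have h_at_ai := hP_eval (a i)
  rw [hP_zero, eval_zero, Finset.sum_eq_single i, eq_comm, mul_eq_zero] at h_at_ai
  · exact h_at_ai.resolve_right hprod
  · intro k hk hki
    exact mul_eq_zero_of_right _
      (Finset.prod_eq_zero (Finset.mem_erase.2 ⟨hki.symm, hi⟩) (sub_self _))
  · exact fun h => absurd hi h

end CauchyFamily

section DiagA

variable {p : ℕ} {K : Type*} [Field K]

theorem shiftL_diagA_self (s : Fin p) :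
    shiftL p p K s s (diagA p K) = diagA p K + deltaFun p K := by
  rw [diagA_eq_diagFun, deltaFun_eq_diagFun, shiftL_diagFun_self, ← map_add]
  congr 1
  funext n
  push_cast [Pi.add_apply, Pi.one_apply]
  ring

theorem recClosure_diagA (hp : 0 < p) :
    recClosure p p K (diagA p K) = Submodule.span K (Set.range ![diagA p K, deltaFun p K]) := by
  set V := Submodule.span K (Set.range ![diagA p K, deltaFun p K])
  have hA : diagA p K ∈ V := Submodule.subset_span ⟨0, rfl⟩
  have hδ : deltaFun p K ∈ V := Submodule.subset_span ⟨1, rfl⟩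
  refine le_antisymm (recClosure_le hA (recClosed_span ?_)) (Submodule.span_le.2 ?_)
  · rintro s t _ ⟨i, rfl⟩
    obtain rfl | hst := eq_or_ne s t
    · fin_cases i
      · show shiftL p p K s s (diagA p K) ∈ V
        rw [shiftL_diagA_self]
        exact V.add_mem hA hδ
      · show shiftL p p K s s (diagFun p K 1) ∈ V
        rw [shiftL_diagFun_self]
        exact hδ
    · obtain ⟨f, hf⟩ : ∃ f, ![diagA p K, deltaFun p K] i = diagFun p K f := by
        fin_cases i
        exacts [⟨fun n => 1 + n, rfl⟩, ⟨1, rfl⟩]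
      rw [hf, shiftL_diagFun_of_ne hst]
      exact V.zero_mem
  · rintro _ ⟨i, rfl⟩
    fin_cases i
    · exact mem_recClosure_self _
    · have hshift := recClosed_recClosure (diagA p K) ⟨0, hp⟩ ⟨0, hp⟩ _ (mem_recClosure_self _)
      rw [shiftL_diagA_self] at hshift
      simpa using Submodule.sub_mem _ hshift (mem_recClosure_self _)

theorem linearIndependent_diagA_deltaFun (hp : 0 < p) :
    LinearIndependent K ![diagA p K, deltaFun p K] := by
  refine LinearIndependent.pair_iff.2 fun a b hab => ?_
  rw [diagA_eq_diagFun, deltaFun_eq_diagFun, ← map_smul, ← map_smul, ← map_add,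
    ← map_zero (diagFun p K)] at hab
  have h := diagFun_injective hp hab
  have h0 := congrFun h 0
  have h1 := congrFun h 1
  simp only [Pi.add_apply, Pi.smul_apply, Pi.one_apply, Pi.zero_apply, smul_eq_mul] at h0 h1
  push_cast at h0 h1
  constructor
  · linear_combination h1 - h0
  · linear_combination 2 * h0 - h1

theorem isRecMatrix_diagA (hp : 0 < p) : IsRecMatrix p p K (diagA p K) := by
  rw [IsRecMatrix, recClosure_diagA hp]
  exact FiniteDimensional.span_of_finite K (Set.finite_range _)

theorem finrank_recClosure_diagA (hp : 0 < p) :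
    Module.finrank K (recClosure p p K (diagA p K)) = 2 := by
  rw [recClosure_diagA hp, finrank_span_eq_card (linearIndependent_diagA_deltaFun hp),
    Fintype.card_fin]

theorem matMul_diagFun_eq_deltaFun {f g : ℕ → K} (hfg : ∀ n, f n * g n = 1) :
    matMul (diagFun p K f) (diagFun p K g) = deltaFun p K := by
  rw [matMul_diagFun, deltaFun_eq_diagFun]
  exact congrArg _ (funext hfg)

theorem not_isRecMatrix_diagFun_inv [CharZero K] (hp : 0 < p) :
    ¬ IsRecMatrix p p K (diagFun p K fun n => (1 + n : K)⁻¹) := by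
  have hv : LinearIndependent K fun (k n : ℕ) => ((n : K) - -(1 + k))⁻¹ := by
    refine linearIndependent_inv_sub (fun k l hkl => by simpa using hkl) Nat.cast_injective ?_
    intro n k h
    have : ((n + 1 + k : ℕ) : K) = 0 := by
      push_cast
      linear_combination h
    exact (by omega : n + 1 + k ≠ 0) (Nat.cast_eq_zero.1 this)
  refine not_isRecMatrix_of_linearIndependent
    (hv.map' _ (LinearMap.ker_eq_bot.2 (diagFun_injective hp))) fun k => ?_
  convert diagFun_comp_add_mem_recClosure hp (fun n => (1 + n : K)⁻¹) k using 1
  refine congrArg _ (funext fun n => ?_)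
  push_cast
  ring

end DiagA

/-- A recurrence matrix invertible in `K^{M_{p×p}}` need not be invertible in
`Rec`: over a field of characteristic `0` and for `p ≥ 2`, the diagonal
function `A[U,U] = 1 + l(U)` is a recurrence matrix, its matrix-product
inverse is the diagonal function `B[U,U] = (1 + l(U))⁻¹`, but `B` is not a
recurrence matrix. -/
theorem recMatrix_inverse_not_rec (p : ℕ) (hp : 2 ≤ p)
    (K : Type*) [Field K] [CharZero K] :
    IsRecMatrix p p K (diagA p K) ∧
    Module.finrank K (recClosure p p K (diagA p K)) = 2 ∧
    (matMul (diagA p K)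
        (fun x => if x.1.1 = x.1.2 then ((1 + x.1.1.length : K))⁻¹ else 0) =
      deltaFun p K) ∧
    (matMul (fun x => if x.1.1 = x.1.2 then ((1 + x.1.1.length : K))⁻¹ else 0)
        (diagA p K) =
      deltaFun p K) ∧
    ¬ IsRecMatrix p p K
        (fun x => if x.1.1 = x.1.2 then ((1 + x.1.1.length : K))⁻¹ else 0) := by
  have hp0 : 0 < p := by omega
  have hinv : (fun x : EqPair p p => if x.1.1 = x.1.2 then ((1 + x.1.1.length : K))⁻¹ else 0) =
      diagFun p K fun n => (1 + n : K)⁻¹ := rfl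
  have hunit (n : ℕ) : (1 + n : K) ≠ 0 := by
    rw [add_comm]
    exact Nat.cast_add_one_ne_zero n
  rw [hinv, diagA_eq_diagFun]
  exact ⟨isRecMatrix_diagA hp0, finrank_recClosure_diagA hp0,
    matMul_diagFun_eq_deltaFun fun n => mul_inv_cancel₀ (hunit n),
    matMul_diagFun_eq_deltaFun fun n => inv_mul_cancel₀ (hunit n),
    not_isRecMatrix_diagFun_inv hp0⟩
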